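/- Let α ∈ (0,1), f_α as above, and let ν be a finite positive Radon measure on ℝ satisfying ν((x−r, x+r)) ≤ C r^ε for all x ∈ ℝ, r > 0, for some C > 0 and ε ∈ (1−α, 1]. Then the convolution u_α = f_α * ν belongs to L^∞(ℝ); more precisely, there is a constant C_{α,ε} such that ∫_ℝ |f_α(x−y)| dν(y) ≤ C_{α,ε} for all x ∈ ℝ. -/
import Mathlib


open MeasureTheory Metric Set Filter
open scoped ENNReal NNReal Topology

/-- The function `f_α` with `D^α f_α = δ_0 - δ_1`, with constant `μ_{1,-α}`. -/
noncomputable def fAlpha (α : ℝ) (x : ℝ) : ℝ :=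
  (2 ^ (-α) * Real.pi ^ (-(1 : ℝ) / 2) * Real.Gamma ((2 - α) / 2) /
      Real.Gamma ((1 + α) / 2)) *
    (|x| ^ (α - 1) * Real.sign x - |x - 1| ^ (α - 1) * Real.sign (x - 1))

lemma abs_real_sign_le_one (r : ℝ) : |Real.sign r| ≤ 1 := by
  rcases Real.sign_apply_eq r with h | h | h <;> rw [h] <;> norm_num

theorem stmt15 (α : ℝ) (hα : α ∈ Set.Ioo (0 : ℝ) 1)
    (ε : ℝ) (hε1 : 1 - α < ε) (hε2 : ε ≤ 1) (C : ℝ) (hC : 0 < C)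
    (ν : Measure ℝ) [IsFiniteMeasure ν]
    (hν : ∀ x : ℝ, ∀ r : ℝ, 0 < r → (ν (Set.Ioo (x - r) (x + r))).toReal ≤ C * r ^ ε) :
    ∃ C' : ℝ, ∀ x : ℝ,
      (∫⁻ y, ENNReal.ofReal |fAlpha α (x - y)| ∂ν) ≤ ENNReal.ofReal C' := by
  obtain ⟨hα0, hα1⟩ := hα
  have h1α : 0 < 1 - α := by linarith
  set K : ℝ := |2 ^ (-α) * Real.pi ^ (-(1 : ℝ) / 2) * Real.Gamma ((2 - α) / 2) /
      Real.Gamma ((1 + α) / 2)| with hK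
  have hK0 : 0 ≤ K := abs_nonneg _
  set p : ℝ := ε / (1 - α) with hp
  have hp1 : 1 < p := by rw [hp, lt_div_iff₀ h1α]; linarith
  -- the tail integral is finite
  have hint : IntegrableOn (fun t : ℝ => C * t ^ (-p)) (Set.Ioi (1 : ℝ)) :=
    (integrableOn_Ioi_rpow_of_lt (by linarith) one_pos).const_mul C
  set T : ℝ≥0∞ := ∫⁻ t in Set.Ioi (1 : ℝ), ENNReal.ofReal (C * t ^ (-p)) with hT
  have hTfin : T ≠ ∞ := hint.lintegral_lt_top.ne
  set B : ℝ≥0∞ := ν Set.univ + T with hB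
  have hBfin : B ≠ ∞ := ENNReal.add_ne_top.mpr ⟨measure_ne_top ν _, hTfin⟩
  -- key estimate for a single singularity at `c`
  have key : ∀ c : ℝ, (∫⁻ y, ENNReal.ofReal (|c - y| ^ (α - 1)) ∂ν) ≤ B := by
    intro c
    have hnn : 0 ≤ᵐ[ν] fun y : ℝ => |c - y| ^ (α - 1) :=
      Filter.Eventually.of_forall fun y => Real.rpow_nonneg (abs_nonneg _) _
    have hmble : AEMeasurable (fun y : ℝ => |c - y| ^ (α - 1)) ν := by
      apply Measurable.aemeasurable
      exact (measurable_const.sub measurable_id).abs.pow measurable_const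
    rw [MeasureTheory.lintegral_eq_lintegral_meas_lt ν hnn hmble]
    have hsplit : Set.Ioi (0 : ℝ) = Set.Ioc 0 1 ∪ Set.Ioi 1 :=
      (Set.Ioc_union_Ioi_eq_Ioi (by norm_num)).symm
    rw [hsplit, lintegral_union measurableSet_Ioi (Set.Ioc_disjoint_Ioi le_rfl)]
    rw [hB]
    gcongr
    · -- small `t` part
      calc ∫⁻ t in Set.Ioc (0 : ℝ) 1, ν {a : ℝ | t < |c - a| ^ (α - 1)}
          ≤ ∫⁻ _ in Set.Ioc (0 : ℝ) 1, ν Set.univ :=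
            lintegral_mono fun t => measure_mono (Set.subset_univ _)
        _ = ν Set.univ * volume (Set.Ioc (0 : ℝ) 1) := by
            rw [MeasureTheory.lintegral_const, Measure.restrict_apply MeasurableSet.univ,
              Set.univ_inter]
        _ = ν Set.univ := by simp [Real.volume_Ioc]
    · -- tail part
      refine setLIntegral_mono (((measurable_id.pow measurable_const).const_mul C).ennreal_ofReal) fun t ht => ?_
      have ht1 : (1 : ℝ) < t := ht
      have ht0 : (0 : ℝ) < t := lt_trans one_pos ht1
      set r : ℝ := t ^ (α - 1)⁻¹ with hr
      have hr0 : 0 < r := Real.rpow_pos_of_pos ht0 _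
      have hsub : {a : ℝ | t < |c - a| ^ (α - 1)} ⊆ Set.Ioo (c - r) (c + r) := by
        intro a ha
        have ha' : t < |c - a| ^ (α - 1) := ha
        have habs : 0 < |c - a| := by
          rcases eq_or_lt_of_le (abs_nonneg (c - a)) with h | h
          · exfalso
            rw [← h, Real.zero_rpow (by linarith : α - 1 ≠ 0)] at ha'
            linarith
          · exact h
        have hlt : |c - a| < r := by
          have := Real.rpow_lt_rpow_of_neg (x := t) (y := |c - a| ^ (α - 1))
            (z := (α - 1)⁻¹) ht0 ha' (by
              rw [inv_neg'']
              linarith)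
          rwa [Real.rpow_rpow_inv (abs_nonneg _) (by linarith : α - 1 ≠ 0)] at this
        have h2 := abs_sub_lt_iff.mp hlt
        constructor
        · linarith [h2.1]
        · linarith [h2.2]
      calc ν {a : ℝ | t < |c - a| ^ (α - 1)} ≤ ν (Set.Ioo (c - r) (c + r)) :=
            measure_mono hsub
        _ = ENNReal.ofReal ((ν (Set.Ioo (c - r) (c + r))).toReal) :=
            (ENNReal.ofReal_toReal (measure_ne_top ν _)).symm
        _ ≤ ENNReal.ofReal (C * r ^ ε) := ENNReal.ofReal_le_ofReal (hν c r hr0)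
        _ = ENNReal.ofReal (C * t ^ (-p)) := by
            have hexp : (α - 1)⁻¹ * ε = -p := by
              rw [hp, div_eq_mul_inv, show (α - 1) = -(1 - α) by ring, inv_neg]
              ring
            rw [hr, ← Real.rpow_mul ht0.le, hexp]
  -- pointwise bound for |fAlpha|
  have hpt : ∀ z : ℝ, |fAlpha α z| ≤ K * (|z| ^ (α - 1) + |z - 1| ^ (α - 1)) := by
    intro z
    rw [fAlpha, abs_mul, ← hK]
    refine mul_le_mul_of_nonneg_left ?_ hK0
    have h1 : |(|z| ^ (α - 1) * Real.sign z)| ≤ |z| ^ (α - 1) := by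
      rw [abs_mul, abs_of_nonneg (Real.rpow_nonneg (abs_nonneg z) _)]
      calc |z| ^ (α - 1) * |Real.sign z| ≤ |z| ^ (α - 1) * 1 :=
            mul_le_mul_of_nonneg_left (abs_real_sign_le_one z)
              (Real.rpow_nonneg (abs_nonneg z) _)
        _ = |z| ^ (α - 1) := mul_one _
    have h2 : |(|z - 1| ^ (α - 1) * Real.sign (z - 1))| ≤ |z - 1| ^ (α - 1) := by
      rw [abs_mul, abs_of_nonneg (Real.rpow_nonneg (abs_nonneg _) _)]
      calc |z - 1| ^ (α - 1) * |Real.sign (z - 1)| ≤ |z - 1| ^ (α - 1) * 1 :=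
            mul_le_mul_of_nonneg_left (abs_real_sign_le_one _)
              (Real.rpow_nonneg (abs_nonneg _) _)
        _ = |z - 1| ^ (α - 1) := mul_one _
    calc |(|z| ^ (α - 1) * Real.sign z - |z - 1| ^ (α - 1) * Real.sign (z - 1))|
        ≤ |(|z| ^ (α - 1) * Real.sign z)| + |(|z - 1| ^ (α - 1) * Real.sign (z - 1))| :=
          abs_sub _ _
      _ ≤ |z| ^ (α - 1) + |z - 1| ^ (α - 1) := add_le_add h1 h2
  -- main bound
  set A : ℝ≥0∞ := ENNReal.ofReal K * (B + B) with hA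
  have hAfin : A ≠ ∞ := ENNReal.mul_ne_top ENNReal.ofReal_ne_top
    (ENNReal.add_ne_top.mpr ⟨hBfin, hBfin⟩)
  refine ⟨A.toReal, fun x => ?_⟩
  have hmain : (∫⁻ y, ENNReal.ofReal |fAlpha α (x - y)| ∂ν) ≤ A := by
    have hmeas1 : Measurable fun y : ℝ => ENNReal.ofReal (|x - y| ^ (α - 1)) :=
      (((measurable_const.sub measurable_id).abs.pow measurable_const)).ennreal_ofReal
    calc ∫⁻ y, ENNReal.ofReal |fAlpha α (x - y)| ∂ν
        ≤ ∫⁻ y, ENNReal.ofReal K *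
            (ENNReal.ofReal (|x - y| ^ (α - 1)) + ENNReal.ofReal (|x - y - 1| ^ (α - 1))) ∂ν := by
          refine lintegral_mono fun y => ?_
          calc ENNReal.ofReal |fAlpha α (x - y)|
              ≤ ENNReal.ofReal (K * (|x - y| ^ (α - 1) + |x - y - 1| ^ (α - 1))) :=
                ENNReal.ofReal_le_ofReal (hpt _)
            _ = ENNReal.ofReal K *
                (ENNReal.ofReal (|x - y| ^ (α - 1)) + ENNReal.ofReal (|x - y - 1| ^ (α - 1))) := by
                rw [ENNReal.ofReal_mul hK0,
                  ENNReal.ofReal_add (Real.rpow_nonneg (abs_nonneg _) _)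
                    (Real.rpow_nonneg (abs_nonneg _) _)]
      _ = ENNReal.ofReal K *
          ((∫⁻ y, ENNReal.ofReal (|x - y| ^ (α - 1)) ∂ν) +
            ∫⁻ y, ENNReal.ofReal (|x - y - 1| ^ (α - 1)) ∂ν) := by
          rw [lintegral_const_mul' _ _ ENNReal.ofReal_ne_top, lintegral_add_left hmeas1]
      _ ≤ ENNReal.ofReal K * (B + B) := by
          gcongr
          · exact key x
          · have : (fun y : ℝ => ENNReal.ofReal (|x - y - 1| ^ (α - 1))) =
                fun y : ℝ => ENNReal.ofReal (|(x - 1) - y| ^ (α - 1)) := by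
              funext y
              ring_nf
            rw [this]
            exact key (x - 1)
      _ = A := hA.symm
  calc (∫⁻ y, ENNReal.ofReal |fAlpha α (x - y)| ∂ν) ≤ A := hmain
    _ = ENNReal.ofReal A.toReal := (ENNReal.ofReal_toReal hAfin).symm
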